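/- For any balanced lattice design X ∈ U(n, q^s) with s ≥ 2: Ave(χ²)(X) = (2/(s(s−1))) ∑_{1 ≤ i < k ≤ n} β(x_i, x_k)² + a, where a = (q² n s + n²(1 − s − q))/(q²(s−1)). -/

import Mathlib

/-!
Since `∑_τ N^{(j,l)}_τ = n`, expanding the squares reduces `Ave(χ²)` to
`∑_{j<l} ∑_τ (N^{(j,l)}_τ)²`. The inner sum counts the ordered pairs of runs that coincide in
both columns `j` and `l`, so by double counting the whole sum is `∑_{(i,k)} C(β(x_i, x_k), 2)`
over ordered pairs of runs, i.e. half of `∑_{(i,k)} β² - ∑_{(i,k)} β`. In the first sum the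
diagonal contributes `n s²` and the rest is twice the sum over `i < k`. The second sum is fixed
by balance: column `j` has `q (n/q)²` coinciding ordered pairs, so `∑_{(i,k)} β = s n²/q`.
-/

open Finset

/-- The coincidence number β(x, w) = #{j : x_j = w_j} of two lattice points. -/
def coincidence {s q : ℕ} (x w : Fin s → Fin q) : ℕ :=
  (univ.filter fun j => x j = w j).card

/-- A design `X ∈ U(n, q^s)` is balanced: `q ∣ n` and every level occurs exactly
`n / q` times in each column. -/
def IsBalanced {n s q : ℕ} (X : Fin n → Fin s → Fin q) : Prop :=
  q ∣ n ∧ ∀ (j : Fin s) (ℓ : Fin q),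
    (univ.filter fun i => X i j = ℓ).card = n / q

/-- The index set of pairs 1 ≤ i < k ≤ n. -/
def pairs (n : ℕ) : Finset (Fin n × Fin n) := univ.filter fun p => p.1 < p.2

/-- The nonorthogonality criterion
Ave(χ²)(X) = (2/(s(s−1))) ∑_{j<l} ∑_{τ₁,τ₂} (N^{(j,l)}_{τ₁,τ₂} − n/q²)². -/
noncomputable def aveChiSq {n s q : ℕ} (X : Fin n → Fin s → Fin q) : ℝ :=
  2 / ((s : ℝ) * ((s : ℝ) - 1)) *
    ∑ p ∈ pairs s, ∑ τ : Fin q × Fin q,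
      (((univ.filter fun i => X i p.1 = τ.1 ∧ X i p.2 = τ.2).card : ℝ)
        - (n : ℝ) / (q : ℝ) ^ 2) ^ 2

theorem sum_card_fiber_sq {ι β : Type*} [Fintype ι] [Fintype β] [DecidableEq β] (f : ι → β) :
    ∑ b, #{i | f i = b} ^ 2 = #{p : ι × ι | f p.1 = f p.2} := by
  rw [card_eq_sum_card_fiberwise (f := fun p => f p.1) (t := univ) (fun _ _ => mem_univ _)]
  refine sum_congr rfl fun b _ => ?_
  rw [sq, ← card_product, ← filter_product]
  congr 1
  ext ⟨i, k⟩
  simp only [mem_filter, mem_univ, true_and, mem_product]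
  constructor
  · rintro ⟨rfl, h⟩; exact ⟨h.symm, rfl⟩
  · rintro ⟨h, rfl⟩; exact ⟨rfl, h.symm⟩

theorem sum_prod_self_eq_diag_add_two_nsmul_lt {ι M : Type*} [Fintype ι] [LinearOrder ι]
    [AddCommMonoid M] (f : ι × ι → M) (hf : ∀ i k, f (i, k) = f (k, i)) :
    ∑ p, f p = ∑ i, f (i, i) + 2 • ∑ p ∈ univ.filter (fun p : ι × ι => p.1 < p.2), f p := by
  have hgt : ∑ p ∈ univ.filter (fun p : ι × ι => p.2 < p.1), f p =
      ∑ p ∈ univ.filter (fun p : ι × ι => p.1 < p.2), f p :=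
    sum_equiv (Equiv.prodComm ι ι) (by simp) (fun ⟨i, k⟩ _ => hf i k)
  have hdiag : ∑ p ∈ univ.filter (fun p : ι × ι => p.1 = p.2), f p = ∑ i, f (i, i) := by
    rw [sum_filter, Fintype.sum_prod_type]
    simp
  have hsplit (p : ι × ι) : (¬ p.1 < p.2 ∧ p.1 = p.2 ↔ p.1 = p.2) ∧
      (¬ p.1 < p.2 ∧ ¬ p.1 = p.2 ↔ p.2 < p.1) := by
    grind
  rw [← sum_filter_add_sum_filter_not univ (fun p : ι × ι => p.1 < p.2),
    ← sum_filter_add_sum_filter_not (univ.filter fun p : ι × ι => ¬ p.1 < p.2)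
      (fun p => p.1 = p.2), filter_filter, filter_filter,
    filter_congr fun p _ => (hsplit p).1, filter_congr fun p _ => (hsplit p).2, hgt, hdiag]
  abel

theorem sum_sq_sub_div_card {T : Type*} [Fintype T] (x : T → ℝ) {m : ℝ} (hx : ∑ t, x t = m) :
    ∑ t, (x t - m / Fintype.card T) ^ 2 = ∑ t, x t ^ 2 - m ^ 2 / Fintype.card T := by
  simp only [sub_sq, sum_add_distrib, sum_sub_distrib, ← sum_mul, ← mul_sum, hx, sum_const,
    card_univ, nsmul_eq_mul]
  rcases eq_or_ne (Fintype.card T : ℝ) 0 with h0 | h0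
  · simp [h0]
  · field_simp; ring

theorem card_pairs_filter_and_eq_choose_two (s : ℕ) (P : Fin s → Prop) [DecidablePred P] :
    #{p ∈ pairs s | P p.1 ∧ P p.2} = (#{j | P j}).choose 2 := by
  rw [← card_product_filter_lt]
  congr 1
  ext ⟨j, l⟩
  simp only [pairs, mem_filter, mem_univ, true_and, mem_product]
  tauto

section Design

variable {n s q : ℕ} (X : Fin n → Fin s → Fin q)

/-- The cell count `N^{(j,l)}_{τ₁,τ₂}`. -/
def cellCount (j l : Fin s) (τ : Fin q × Fin q) : ℕ := #{i | X i j = τ.1 ∧ X i l = τ.2}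

theorem sum_cellCount (j l : Fin s) : ∑ τ, cellCount X j l τ = n := by
  simpa [cellCount, Prod.ext_iff] using (card_eq_sum_card_fiberwise (s := univ) (t := univ)
    (f := fun i => (X i j, X i l)) (fun _ _ => mem_univ _)).symm

theorem sum_cellCount_sq (j l : Fin s) :
    ∑ τ, cellCount X j l τ ^ 2 =
      #{r : Fin n × Fin n | X r.1 j = X r.2 j ∧ X r.1 l = X r.2 l} := by
  simpa [cellCount, Prod.ext_iff] using sum_card_fiber_sq fun i => (X i j, X i l)

theorem coincidence_self (x : Fin s → Fin q) : coincidence x x = s := by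
  simp [coincidence]

theorem coincidence_comm (x w : Fin s → Fin q) : coincidence x w = coincidence w x := by
  simp only [coincidence, eq_comm]

theorem sum_pairs_sum_cellCount_sq :
    ∑ p ∈ pairs s, ∑ τ, cellCount X p.1 p.2 τ ^ 2 =
      ∑ r : Fin n × Fin n, (coincidence (X r.1) (X r.2)).choose 2 := by
  simp only [sum_cellCount_sq, coincidence, ← card_pairs_filter_and_eq_choose_two]
  exact sum_card_bipartiteAbove_eq_sum_card_bipartiteBelow
    (r := fun (p : Fin s × Fin s) (r : Fin n × Fin n) =>
      X r.1 p.1 = X r.2 p.1 ∧ X r.1 p.2 = X r.2 p.2)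

theorem sum_coincidence_sq :
    ∑ r : Fin n × Fin n, coincidence (X r.1) (X r.2) ^ 2 =
      n * s ^ 2 + 2 * ∑ p ∈ pairs n, coincidence (X p.1) (X p.2) ^ 2 := by
  rw [sum_prod_self_eq_diag_add_two_nsmul_lt _ fun i k => by rw [coincidence_comm], smul_eq_mul]
  simp [coincidence_self, pairs]

theorem sum_coincidence_of_isBalanced (hX : IsBalanced X) :
    ∑ r : Fin n × Fin n, coincidence (X r.1) (X r.2) = s * (q * (n / q) ^ 2) := by
  calc ∑ r : Fin n × Fin n, coincidence (X r.1) (X r.2)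
      = ∑ j, #{r : Fin n × Fin n | X r.1 j = X r.2 j} :=
        sum_card_bipartiteAbove_eq_sum_card_bipartiteBelow
          (r := fun (r : Fin n × Fin n) j => X r.1 j = X r.2 j)
    _ = ∑ j, ∑ ℓ, #{i | X i j = ℓ} ^ 2 := by simp only [sum_card_fiber_sq]
    _ = s * (q * (n / q) ^ 2) := by simp [hX.2]

theorem aveChiSq_eq_sum_cellCount_sq :
    aveChiSq X = 2 / ((s : ℝ) * (s - 1)) *
      (∑ p ∈ pairs s, ∑ τ, (cellCount X p.1 p.2 τ : ℝ) ^ 2 - #(pairs s) * (n ^ 2 / q ^ 2)) := by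
  have hcell (j l : Fin s) : ∑ τ, ((cellCount X j l τ : ℝ) - n / q ^ 2) ^ 2 =
      ∑ τ, (cellCount X j l τ : ℝ) ^ 2 - n ^ 2 / q ^ 2 := by
    simpa [sq] using sum_sq_sub_div_card (fun τ => (cellCount X j l τ : ℝ))
      (by exact_mod_cast sum_cellCount X j l)
  change 2 / ((s : ℝ) * (s - 1)) *
    ∑ p ∈ pairs s, ∑ τ, ((cellCount X p.1 p.2 τ : ℝ) - n / q ^ 2) ^ 2 = _
  rw [sum_congr rfl fun p _ => hcell p.1 p.2, sum_sub_distrib, sum_const, nsmul_eq_mul]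

end Design

/-- Theorem 4 (identity): for a balanced design,
Ave(χ²)(X) = (2/(s(s−1))) ∑_{i<k} β(x_i,x_k)² + a, where
a = (q²ns + n²(1 − s − q)) / (q²(s−1)). -/
theorem aveChiSq_identity (n s q : ℕ) (hq : 2 ≤ q) (hs : 2 ≤ s)
    (X : Fin n → Fin s → Fin q) (hX : IsBalanced X)
    (a : ℝ) (ha : a = ((q : ℝ) ^ 2 * n * s + (n : ℝ) ^ 2 * (1 - s - q)) /
      ((q : ℝ) ^ 2 * ((s : ℝ) - 1))) :
    aveChiSq X = 2 / ((s : ℝ) * ((s : ℝ) - 1)) *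
        ∑ p ∈ pairs n, (coincidence (X p.1) (X p.2) : ℝ) ^ 2 + a := by
  have hq0 : (q : ℝ) ≠ 0 := Nat.cast_ne_zero.2 (by omega)
  have hs0 : (s : ℝ) ≠ 0 := Nat.cast_ne_zero.2 (by omega)
  have hs1 : (s : ℝ) - 1 ≠ 0 := sub_ne_zero.2 (Nat.cast_ne_one.2 (by omega))
  have hcellSq : ∑ p ∈ pairs s, ∑ τ, (cellCount X p.1 p.2 τ : ℝ) ^ 2 =
      ∑ r : Fin n × Fin n,
        (coincidence (X r.1) (X r.2) : ℝ) * (coincidence (X r.1) (X r.2) - 1) / 2 := by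
    simpa [Nat.cast_choose_two] using congrArg (Nat.cast (R := ℝ)) (sum_pairs_sum_cellCount_sq X)
  have hcoinSq : ∑ r : Fin n × Fin n, (coincidence (X r.1) (X r.2) : ℝ) ^ 2 =
      n * s ^ 2 + 2 * ∑ p ∈ pairs n, (coincidence (X p.1) (X p.2) : ℝ) ^ 2 := by
    exact_mod_cast sum_coincidence_sq X
  have hcoin : ∑ r : Fin n × Fin n, (coincidence (X r.1) (X r.2) : ℝ) = s * (q * (n / q) ^ 2) := by
    rw [← Nat.cast_div_charZero hX.1]
    exact_mod_cast sum_coincidence_of_isBalanced X hX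
  have hpairs : (#(pairs s) : ℝ) = s * (s - 1) / 2 := by
    simpa [Nat.cast_choose_two] using
      congrArg (Nat.cast (R := ℝ)) (card_pairs_filter_and_eq_choose_two s fun _ => True)
  rw [aveChiSq_eq_sum_cellCount_sq, hcellSq, hpairs, ha]
  simp only [mul_sub, mul_one, sub_div, sum_sub_distrib, ← sum_div, ← sq]
  rw [hcoinSq, hcoin]
  field_simp
  ring
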